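/- arXiv:0911.5660 — 4 statements merged into one kernel-verified Lean document; each statement's English description precedes it below -/
import Mathlib

section
/- Let M be a matching and M_opt any matching in a bipartite graph. If every connected component of M ⊕ M_opt that is a path of odd length has at least as many M-edges as M_opt-edges, or has length at least 5 when it has more M_opt-edges, then |M_opt| ≤ (3/2)·|M|. -/
/-!
The symmetric difference of two matchings has maximum degree two and its edges alternate
between `M` and `Mopt`, so each of its components is an alternating path or cycle.  A cycle
or an even path has as many edges of each kind; an odd path has one more edge of one kind, and
if that kind is `Mopt` the hypothesis gives it length at least `5`, i.e. `k ≥ 2` edges of `M`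
against `k + 1 ≤ 3k/2` of `Mopt`.  Removing the components one at a time gives
`2 |Mopt \ M| ≤ 3 |M \ Mopt|`, and the common edges only improve the ratio.
-/

open scoped symmDiff

/-- `M` is a matching in the graph `G`: a set of edges of `G` no two of which
share a vertex. -/
def IsMatchingIn {V : Type*} (G : SimpleGraph V) (M : Finset (Sym2 V)) : Prop :=
  ↑M ⊆ G.edgeSet ∧ ∀ e ∈ M, ∀ f ∈ M, e ≠ f → ∀ v : V, v ∈ e → v ∉ f

namespace List

variable {α : Type*}

theorem countP_not_le_countP_of_isChain {P : α → Prop} [DecidablePred P] :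
    ∀ {l : List α}, l.IsChain (fun x y => P x ↔ ¬ P y) → (hne : l ≠ []) →
      P (l.head hne) →
      l.countP (¬ P ·) ≤ l.countP (P ·) ∧ l.countP (P ·) ≤ l.countP (¬ P ·) + 1
  | [a], _, _, ha => by simp_all
  | a :: b :: l, hl, _, ha => by
    obtain ⟨hab, hbl⟩ := isChain_cons_cons.mp hl
    simp only [head_cons] at ha
    have hb : ¬ P b := hab.mp ha
    have ih := countP_not_le_countP_of_isChain (P := (¬ P ·))
      (hbl.imp fun x y hxy => by tauto) (cons_ne_nil b l) hb
    simp only [not_not, countP_cons, ha, hb, not_true, not_false_eq_true, decide_true,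
      decide_false, if_true, Bool.false_eq_true, if_false] at ih ⊢
    omega

theorem countP_not_sub_countP_le_one_of_isChain {P : α → Prop} [DecidablePred P] {l : List α}
    (hl : l.IsChain (fun x y => P x ↔ ¬ P y)) :
    l.countP (¬ P ·) ≤ l.countP (P ·) + 1 ∧ l.countP (P ·) ≤ l.countP (¬ P ·) + 1 := by
  rcases eq_or_ne l [] with rfl | hne
  · simp
  by_cases hp : P (l.head hne)
  · have := countP_not_le_countP_of_isChain hl hne hp
    omega
  · have := countP_not_le_countP_of_isChain (P := (¬ P ·)) (hl.imp fun _ _ => by tauto) hne hp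
    simp only [not_not] at this
    omega

theorem countP_not_eq_countP_of_isChain {P : α → Prop} [DecidablePred P] {l : List α}
    (hl : l.IsChain (fun x y => P x ↔ ¬ P y)) (hne : l ≠ [])
    (h : P (l.head hne) ↔ ¬ P (l.getLast hne)) : l.countP (¬ P ·) = l.countP (P ·) := by
  have hrev : l.reverse.IsChain (fun x y => P x ↔ ¬ P y) :=
    isChain_reverse.mpr (hl.imp fun _ _ => by tauto)
  have hne' : l.reverse ≠ [] := reverse_ne_nil_iff.mpr hne
  by_cases hp : P (l.head hne)
  · have h1 := countP_not_le_countP_of_isChain hl hne hp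
    have h2 := countP_not_le_countP_of_isChain (P := (¬ P ·))
      (hrev.imp fun _ _ => by tauto) hne' (by simp_all)
    simp only [not_not, countP_reverse] at h2
    omega
  · have h1 := countP_not_le_countP_of_isChain (P := (¬ P ·)) (hl.imp fun _ _ => by tauto) hne hp
    have h2 := countP_not_le_countP_of_isChain hrev hne' (by simp_all)
    simp only [not_not, countP_reverse] at h1 h2
    omega

end List

namespace SimpleGraph

variable {V : Type*} {H : SimpleGraph V}

def Walk.HasAllEdgesAt {u v : V} (p : H.Walk u v) (w : V) : Prop :=
  ∀ x, H.Adj w x → s(w, x) ∈ p.edges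

lemma Walk.hasAllEdgesAt_reverse_iff {u v w : V} (p : H.Walk u v) :
    p.reverse.HasAllEdgesAt w ↔ p.HasAllEdgesAt w := by
  simp [Walk.HasAllEdgesAt, Walk.edges_reverse]

def IsComponentClosed (H : SimpleGraph V) (S : Finset (Sym2 V)) : Prop :=
  ∀ ⦃w x y⦄, H.Adj w x → H.Adj w y → s(w, x) ∈ S → s(w, y) ∈ S

namespace IsComponentClosed

variable {S C : Finset (Sym2 V)}

lemma sdiff [DecidableEq V] (hS : H.IsComponentClosed S) (hC : H.IsComponentClosed C) :
    H.IsComponentClosed (S \ C) := by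
  intro w x y hx hy hwx
  rw [Finset.mem_sdiff] at hwx ⊢
  exact ⟨hS hx hy hwx.1, fun hwy => hwx.2 (hC hy hx hwy)⟩

lemma edges_subset_of_mem_start (hS : H.IsComponentClosed S) {u v y : V} (hy : H.Adj u y)
    (huy : s(u, y) ∈ S) : ∀ p : H.Walk u v, ∀ e ∈ p.edges, e ∈ S
  | .nil => by simp
  | .cons h q => by
    have hub : s(_, _) ∈ S := hS hy h huy
    rintro e (he | ⟨_, he⟩)
    · exact hub
    · exact edges_subset_of_mem_start hS h.symm (Sym2.eq_swap ▸ hub) q e he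

lemma edges_subset (hS : H.IsComponentClosed S) {u v : V} :
    ∀ (p : H.Walk u v) {e : Sym2 V}, e ∈ p.edges → e ∈ S → ∀ f ∈ p.edges, f ∈ S
  | .nil, _, he, _ => by simp at he
  | .cons h q, e, he, heS => by
    rw [Walk.edges_cons, List.mem_cons] at he
    rcases he with rfl | he
    · exact edges_subset_of_mem_start hS h heS _
    · have hq := edges_subset hS q he heS
      cases q with
      | nil => simp at he
      | cons h' q' =>
        have hub : s(_, _) ∈ S := hS h' h.symm (hq _ (by simp))
        rintro f (hf | ⟨_, hf⟩)
        · simpa [Sym2.eq_swap] using hub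
        · exact hq f hf

end IsComponentClosed

lemma Walk.isComponentClosed_edges_toFinset [DecidableEq V] {u v : V} (p : H.Walk u v)
    (hp : ∀ w ∈ p.support, p.HasAllEdgesAt w) : H.IsComponentClosed p.edges.toFinset := by
  intro w x y _ hy hwx
  rw [List.mem_toFinset] at hwx ⊢
  exact hp w (p.fst_mem_support_of_mem_edges hwx) y hy

end SimpleGraph

open SimpleGraph

section SymmDiff

variable {V : Type*} [DecidableEq V] {G : SimpleGraph V} {M Mopt : Finset (Sym2 V)}

abbrev symmDiffGraph (M Mopt : Finset (Sym2 V)) : SimpleGraph V :=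
  fromEdgeSet ((M ∆ Mopt : Finset (Sym2 V)) : Set (Sym2 V))

lemma mem_symmDiff_of_mem_edges {u v : V} {p : (symmDiffGraph M Mopt).Walk u v} {e : Sym2 V}
    (he : e ∈ p.edges) : e ∈ M ∆ Mopt := by
  have := p.edges_subset_edgeSet he
  rw [edgeSet_fromEdgeSet] at this
  exact_mod_cast this.1

lemma mem_iff_not_mem_of_mem_symmDiff (hM : IsMatchingIn G M) (hMopt : IsMatchingIn G Mopt)
    {e f : Sym2 V} (he : e ∈ M ∆ Mopt) (hf : f ∈ M ∆ Mopt) (hne : e ≠ f) {w : V}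
    (hwe : w ∈ e) (hwf : w ∈ f) : e ∈ M ↔ f ∉ M := by
  rw [Finset.mem_symmDiff] at he hf
  refine ⟨fun heM hfM => hM.2 e heM f hfM hne w hwe hwf, fun hfM => ?_⟩
  by_contra heM
  exact hMopt.2 e (by tauto) f (by tauto) hne w hwe hwf

lemma coe_symmDiff_subset_edgeSet (hM : IsMatchingIn G M) (hMopt : IsMatchingIn G Mopt) :
    ↑(M ∆ Mopt) ⊆ (symmDiffGraph M Mopt).edgeSet := by
  intro e he
  rw [edgeSet_fromEdgeSet]
  refine ⟨he, fun hdiag => ?_⟩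
  rcases Finset.mem_symmDiff.mp he with ⟨heM, _⟩ | ⟨heM, _⟩
  · exact not_isDiag_of_mem_edgeSet G (hM.1 heM) hdiag
  · exact not_isDiag_of_mem_edgeSet G (hMopt.1 heM) hdiag

namespace symmDiffGraph

lemma mem_iff_not_mem (hM : IsMatchingIn G M) (hMopt : IsMatchingIn G Mopt) {w x y : V}
    (hx : (symmDiffGraph M Mopt).Adj w x) (hy : (symmDiffGraph M Mopt).Adj w y) (hxy : x ≠ y) :
    s(w, x) ∈ M ↔ s(w, y) ∉ M := by
  rw [fromEdgeSet_adj] at hx hy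
  exact mem_iff_not_mem_of_mem_symmDiff hM hMopt hx.1 hy.1 (by rwa [Ne, Sym2.congr_right])
    (Sym2.mem_mk_left w x) (Sym2.mem_mk_left w y)

lemma eq_or_eq_of_adj (hM : IsMatchingIn G M) (hMopt : IsMatchingIn G Mopt) {w x y z : V}
    (hx : (symmDiffGraph M Mopt).Adj w x) (hy : (symmDiffGraph M Mopt).Adj w y) (hxy : x ≠ y)
    (hz : (symmDiffGraph M Mopt).Adj w z) : z = x ∨ z = y := by
  by_contra! h
  have := mem_iff_not_mem hM hMopt hx hy hxy
  have := mem_iff_not_mem hM hMopt hx hz h.1.symm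
  have := mem_iff_not_mem hM hMopt hy hz h.2.symm
  tauto

end symmDiffGraph

lemma countP_mem_edges_eq_countP_not_mem {u v : V} (p : (symmDiffGraph M Mopt).Walk u v) :
    p.edges.countP (· ∈ Mopt) = p.edges.countP (· ∉ M) := by
  refine List.countP_congr fun e he => ?_
  have := mem_symmDiff_of_mem_edges he
  rw [Finset.mem_symmDiff] at this
  simp only [decide_eq_true_eq]
  tauto

/-- The maximal odd paths of `M ∆ Mopt` with more `Mopt`-edges are the `M`-augmenting
paths. -/
def NoShortAugmentingPath (M Mopt : Finset (Sym2 V)) : Prop :=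
  ∀ (u v : V) (p : (symmDiffGraph M Mopt).Walk u v), p.IsPath → Odd p.length →
    p.HasAllEdgesAt u → p.HasAllEdgesAt v →
    ((p.edges.filter (· ∈ Mopt)).length ≤ (p.edges.filter (· ∈ M)).length ∨
      ((p.edges.filter (· ∈ M)).length < (p.edges.filter (· ∈ Mopt)).length ∧ 5 ≤ p.length))

namespace SimpleGraph.Walk

lemma IsTrail.isChain_edges (hM : IsMatchingIn G M) (hMopt : IsMatchingIn G Mopt) :
    ∀ {u v : V} {p : (symmDiffGraph M Mopt).Walk u v}, p.IsTrail →
      p.edges.IsChain (fun e f => e ∈ M ↔ f ∉ M)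
  | _, _, .nil, _ => by simp
  | _, _, .cons _ .nil, _ => by simp
  | u, _, .cons (v := b) h (.cons (v := c) h' q), hp => by
    rw [edges_cons, edges_cons, List.isChain_cons_cons]
    refine ⟨?_, hp.of_cons.isChain_edges hM hMopt⟩
    have huc : u ≠ c := by
      rintro rfl
      exact ((isTrail_cons _ _).mp hp).2 (by simp [Sym2.eq_swap])
    rw [Sym2.eq_swap]
    exact symmDiffGraph.mem_iff_not_mem hM hMopt h.symm h' huc

lemma IsPath.hasAllEdgesAt_of_ne (hM : IsMatchingIn G M) (hMopt : IsMatchingIn G Mopt) :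
    ∀ {u v : V} {p : (symmDiffGraph M Mopt).Walk u v}, p.IsPath →
      ∀ {w : V}, w ∈ p.support → w ≠ u → w ≠ v → p.HasAllEdgesAt w
  | _, _, .nil, _, _, hw, hwu, _ => absurd (List.mem_singleton.mp hw) hwu
  | u, v, .cons (v := b) h q, hp, w, hw, hwu, hwv => by
    have hwq : w ∈ q.support := (List.mem_cons.mp hw).resolve_left hwu
    have hq := (cons_isPath_iff h q).mp hp
    by_cases hwb : w = b
    · subst hwb
      cases q with
      | nil => exact absurd rfl hwv
      | @cons _ c _ h' q' =>
        have huc : u ≠ c := fun huc => hq.2 (huc ▸ (q'.start_mem_support.tail _))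
        intro x hx
        rcases symmDiffGraph.eq_or_eq_of_adj hM hMopt h.symm h' huc hx with rfl | rfl
        · simp [Sym2.eq_swap]
        · simp
    · intro x hx
      exact List.mem_cons_of_mem _ (hq.1.hasAllEdgesAt_of_ne hM hMopt hwq hwb hwv x hx)

lemma IsCycle.hasAllEdgesAt (hM : IsMatchingIn G M) (hMopt : IsMatchingIn G Mopt) {a : V}
    {c : (symmDiffGraph M Mopt).Walk a a} (hc : c.IsCycle) {w : V} (hw : w ∈ c.support) :
    c.HasAllEdgesAt w := by
  suffices ∀ {a : V} {c : (symmDiffGraph M Mopt).Walk a a}, c.IsCycle → c.HasAllEdgesAt a by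
    intro x hx
    exact (c.rotate_edges w hw).mem_iff.mp (this (hc.rotate hw) x hx)
  intro a c hc x hx
  rcases symmDiffGraph.eq_or_eq_of_adj hM hMopt (c.adj_snd hc.not_nil)
      (c.adj_penultimate hc.not_nil).symm hc.snd_ne_penultimate hx with rfl | rfl
  · exact c.mk_start_snd_mem_edges hc.not_nil
  · simpa [Sym2.eq_swap] using c.mk_penultimate_end_mem_edges hc.not_nil

lemma IsPath.exists_isCycle_of_not_hasAllEdgesAt (hM : IsMatchingIn G M)
    (hMopt : IsMatchingIn G Mopt) {u v : V} {p : (symmDiffGraph M Mopt).Walk u v}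
    (hp : p.IsPath) (hv : ¬ p.HasAllEdgesAt v)
    (hlongest : ∀ (w : V) (q : (symmDiffGraph M Mopt).Walk u w), q.IsPath →
      p.edges ⊆ q.edges → q.length ≤ p.length) :
    ∃ c : (symmDiffGraph M Mopt).Walk v v, c.IsCycle ∧ p.edges ⊆ c.edges := by
  simp only [HasAllEdgesAt, not_forall] at hv
  obtain ⟨x, hx, hvx⟩ := hv
  have hxs : x ∈ p.support := by
    by_contra hxs
    have := hlongest x (p.concat hx) (hp.concat hxs hx) (by simp [edges_concat])
    simp at this
  obtain rfl : x = u := by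
    by_contra hxu
    exact hvx (by simpa [Sym2.eq_swap] using
      hp.hasAllEdgesAt_of_ne hM hMopt hxs hxu hx.ne.symm v hx.symm)
  exact ⟨cons hx p, (cons_isCycle_iff p hx).mpr ⟨hp, hvx⟩, by simp⟩

lemma IsPath.two_mul_countP_le (hM : IsMatchingIn G M) (hMopt : IsMatchingIn G Mopt)
    (hshort : NoShortAugmentingPath M Mopt) {u v : V} {p : (symmDiffGraph M Mopt).Walk u v}
    (hp : p.IsPath) (hu : p.HasAllEdgesAt u) (hv : p.HasAllEdgesAt v) :
    2 * p.edges.countP (· ∈ Mopt) ≤ 3 * p.edges.countP (· ∈ M) := by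
  have hsum := List.length_eq_countP_add_countP (· ∈ M) (l := p.edges)
  have halt := List.countP_not_sub_countP_le_one_of_isChain (hp.isTrail.isChain_edges hM hMopt)
  simp only [decide_eq_true_eq] at hsum
  rw [← countP_mem_edges_eq_countP_not_mem] at halt hsum
  simp only [List.countP_eq_length_filter, Walk.length_edges] at hsum halt ⊢
  by_cases hle : (p.edges.filter (· ∈ Mopt)).length ≤ (p.edges.filter (· ∈ M)).length
  · omega
  · have hodd : Odd p.length := ⟨(p.edges.filter (· ∈ M)).length, by omega⟩
    have := hshort u v p hp hodd hu hv
    omega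

lemma IsCycle.countP_eq (hM : IsMatchingIn G M) (hMopt : IsMatchingIn G Mopt) {a : V}
    {c : (symmDiffGraph M Mopt).Walk a a} (hc : c.IsCycle) :
    c.edges.countP (· ∈ Mopt) = c.edges.countP (· ∈ M) := by
  have hne : c.edges ≠ [] := by simpa using hc.not_nil
  rw [countP_mem_edges_eq_countP_not_mem]
  refine List.countP_not_eq_countP_of_isChain (hc.isTrail.isChain_edges hM hMopt) hne ?_
  rw [head_edges_eq_mk_start_snd, getLast_edges_eq_mk_penultimate_end,
    Sym2.eq_swap (a := c.penultimate)]
  exact symmDiffGraph.mem_iff_not_mem hM hMopt (c.adj_snd hc.not_nil)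
    (c.adj_penultimate hc.not_nil).symm hc.snd_ne_penultimate

end SimpleGraph.Walk

lemma exists_isPath_or_isCycle_of_adj (hM : IsMatchingIn G M) (hMopt : IsMatchingIn G Mopt)
    [Fintype V] {x y : V} (hxy : (symmDiffGraph M Mopt).Adj x y) :
    (∃ (u v : V) (p : (symmDiffGraph M Mopt).Walk u v), p.IsPath ∧ s(x, y) ∈ p.edges ∧
      p.HasAllEdgesAt u ∧ p.HasAllEdgesAt v) ∨
    ∃ (a : V) (c : (symmDiffGraph M Mopt).Walk a a), c.IsCycle ∧ s(x, y) ∈ c.edges := by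
  classical
  -- a longest path through `s(x, y)`: an end where it cannot be extended closes a cycle
  let P (n : ℕ) : Prop := ∃ (u v : V) (p : (symmDiffGraph M Mopt).Walk u v),
    p.IsPath ∧ s(x, y) ∈ p.edges ∧ p.length = n
  have hxy_path : (Walk.cons hxy .nil).IsPath := by simp [hxy.ne]
  obtain ⟨u, v, p, hp, hxyp, hlen⟩ : P (Nat.findGreatest P (Fintype.card V)) :=
    Nat.findGreatest_spec hxy_path.length_lt.le ⟨x, y, _, hxy_path, by simp, rfl⟩
  have hlongest {a b : V} (q : (symmDiffGraph M Mopt).Walk a b) (hq : q.IsPath)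
      (hxyq : s(x, y) ∈ q.edges) : q.length ≤ p.length := by
    by_contra! hlt
    exact Nat.findGreatest_is_greatest (hlen ▸ hlt) hq.length_lt.le ⟨a, b, q, hq, hxyq, rfl⟩
  by_cases hu : p.HasAllEdgesAt u
  · by_cases hv : p.HasAllEdgesAt v
    · exact .inl ⟨u, v, p, hp, hxyp, hu, hv⟩
    · obtain ⟨c, hc, hpc⟩ := hp.exists_isCycle_of_not_hasAllEdgesAt hM hMopt hv
        fun w q hq hpq => hlongest q hq (hpq hxyp)
      exact .inr ⟨v, c, hc, hpc hxyp⟩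
  · obtain ⟨c, hc, hpc⟩ := hp.reverse.exists_isCycle_of_not_hasAllEdgesAt hM hMopt
      (by rwa [Walk.hasAllEdgesAt_reverse_iff])
      fun w q hq hpq => by simpa using hlongest q hq (hpq (by simpa using hxyp))
    exact .inr ⟨u, c, hc, hpc (by simpa using hxyp)⟩

lemma exists_component_trail_of_adj (hM : IsMatchingIn G M) (hMopt : IsMatchingIn G Mopt)
    [Fintype V] (hshort : NoShortAugmentingPath M Mopt) {x y : V}
    (hxy : (symmDiffGraph M Mopt).Adj x y) :
    ∃ (u v : V) (p : (symmDiffGraph M Mopt).Walk u v), p.IsTrail ∧ s(x, y) ∈ p.edges ∧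
      (symmDiffGraph M Mopt).IsComponentClosed p.edges.toFinset ∧
      2 * p.edges.countP (· ∈ Mopt) ≤ 3 * p.edges.countP (· ∈ M) := by
  rcases exists_isPath_or_isCycle_of_adj hM hMopt hxy with
    ⟨u, v, p, hp, hxyp, hu, hv⟩ | ⟨a, c, hc, hxyc⟩
  · refine ⟨u, v, p, hp.isTrail, hxyp, p.isComponentClosed_edges_toFinset fun w hw => ?_,
      hp.two_mul_countP_le hM hMopt hshort hu hv⟩
    by_cases hwu : w = u
    · exact hwu ▸ hu
    by_cases hwv : w = v
    · exact hwv ▸ hv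
    exact hp.hasAllEdgesAt_of_ne hM hMopt hw hwu hwv
  · refine ⟨a, a, c, hc.isTrail, hxyc,
      c.isComponentClosed_edges_toFinset fun w hw => hc.hasAllEdgesAt hM hMopt hw, ?_⟩
    have := hc.countP_eq hM hMopt
    omega

lemma two_mul_card_filter_le_of_isComponentClosed (hM : IsMatchingIn G M)
    (hMopt : IsMatchingIn G Mopt) [Fintype V] (hshort : NoShortAugmentingPath M Mopt)
    (S : Finset (Sym2 V)) (hSD : ↑S ⊆ (symmDiffGraph M Mopt).edgeSet)
    (hS : (symmDiffGraph M Mopt).IsComponentClosed S) :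
    2 * (S.filter (· ∈ Mopt)).card ≤ 3 * (S.filter (· ∈ M)).card := by
  induction S using Finset.strongInduction with
  | H S ih =>
  obtain rfl | ⟨e, he⟩ := S.eq_empty_or_nonempty
  · simp
  induction e with
  | _ x y =>
  obtain ⟨u, v, p, hp, hxyp, hC, hcount⟩ :=
    exists_component_trail_of_adj hM hMopt hshort (hSD he)
  set C := p.edges.toFinset
  have hCS : C ⊆ S := fun f hf => hS.edges_subset p hxyp he f (List.mem_toFinset.mp hf)
  have hcard (P : Sym2 V → Prop) [DecidablePred P] :
      (S.filter P).card = ((S \ C).filter P).card + p.edges.countP (P ·) := by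
    rw [← Finset.card_sdiff_add_card_eq_card (Finset.filter_subset_filter P hCS),
      List.countP_eq_length_filter, ← List.toFinset_card_of_nodup (hp.edges_nodup.filter _),
      List.toFinset_filter]
    simp only [decide_eq_true_eq]
    congr 2
    ext f
    simp only [Finset.mem_sdiff, Finset.mem_filter]
    tauto
  have := ih (S \ C) (Finset.sdiff_ssubset hCS ⟨_, List.mem_toFinset.mpr hxyp⟩)
    (fun f hf => hSD (Finset.mem_sdiff.mp hf).1) (hS.sdiff hC)
  rw [hcard (· ∈ Mopt), hcard (· ∈ M)]
  omega

end SymmDiff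

theorem odd_components_condition_implies_three_halves_general
    {V : Type*} [Fintype V] [DecidableEq V] (G : SimpleGraph V)
    (M Mopt : Finset (Sym2 V)) (hM : IsMatchingIn G M) (hMopt : IsMatchingIn G Mopt)
    (h : ∀ (u v : V)
      (p : (SimpleGraph.fromEdgeSet ((M ∆ Mopt : Finset (Sym2 V)) : Set (Sym2 V))).Walk u v),
      p.IsPath → Odd p.length →
      (∀ x : V, (SimpleGraph.fromEdgeSet ((M ∆ Mopt : Finset (Sym2 V)) : Set (Sym2 V))).Adj u x →
        s(u, x) ∈ p.edges) →
      (∀ x : V, (SimpleGraph.fromEdgeSet ((M ∆ Mopt : Finset (Sym2 V)) : Set (Sym2 V))).Adj v x →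
        s(v, x) ∈ p.edges) →
      ((p.edges.filter (fun e => e ∈ Mopt)).length ≤ (p.edges.filter (fun e => e ∈ M)).length ∨
        ((p.edges.filter (fun e => e ∈ M)).length < (p.edges.filter (fun e => e ∈ Mopt)).length ∧
          5 ≤ p.length))) :
    (Mopt.card : ℝ) ≤ 3 / 2 * M.card := by
  have hbound : 2 * (Mopt \ M).card ≤ 3 * (M \ Mopt).card := by
    have hopt : (M ∆ Mopt).filter (· ∈ Mopt) = Mopt \ M := by ext; grind [Finset.mem_symmDiff]
    have hm : (M ∆ Mopt).filter (· ∈ M) = M \ Mopt := by ext; grind [Finset.mem_symmDiff]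
    rw [← hopt, ← hm]
    exact two_mul_card_filter_le_of_isComponentClosed hM hMopt h _
      (coe_symmDiff_subset_edgeSet hM hMopt) fun _ _ _ _ hy _ => ((fromEdgeSet_adj _).mp hy).1
  have hMopt_split := Finset.card_sdiff_add_card_inter Mopt M
  have hM_split := Finset.card_sdiff_add_card_inter M Mopt
  rw [Finset.inter_comm] at hM_split
  have : 2 * Mopt.card ≤ 3 * M.card := by omega
  have : (2 * Mopt.card : ℝ) ≤ 3 * M.card := by exact_mod_cast this
  linarith

/-- let `M`, `Mopt` be matchings in a finite bipartite graph.  If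
every connected component of `M ∆ Mopt` (paths in the symmetric difference
graph that cannot be extended at either endpoint) that is a path of odd
length has at least as many `M`-edges as `Mopt`-edges, or has length at least
`5` when it has more `Mopt`-edges, then `|Mopt| ≤ (3/2)·|M|`. -/
theorem odd_components_condition_implies_three_halves
    {V : Type*} [Fintype V] [DecidableEq V] (G : SimpleGraph V)
    (hbip : G.Colorable 2)
    (M Mopt : Finset (Sym2 V)) (hM : IsMatchingIn G M) (hMopt : IsMatchingIn G Mopt)
    (h : ∀ (u v : V)
      (p : (SimpleGraph.fromEdgeSet ((M ∆ Mopt : Finset (Sym2 V)) : Set (Sym2 V))).Walk u v),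
      p.IsPath → Odd p.length →
      (∀ x : V, (SimpleGraph.fromEdgeSet ((M ∆ Mopt : Finset (Sym2 V)) : Set (Sym2 V))).Adj u x →
        s(u, x) ∈ p.edges) →
      (∀ x : V, (SimpleGraph.fromEdgeSet ((M ∆ Mopt : Finset (Sym2 V)) : Set (Sym2 V))).Adj v x →
        s(v, x) ∈ p.edges) →
      ((p.edges.filter (fun e => e ∈ Mopt)).length ≤ (p.edges.filter (fun e => e ∈ M)).length ∨
        ((p.edges.filter (fun e => e ∈ M)).length < (p.edges.filter (fun e => e ∈ Mopt)).length ∧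
          5 ≤ p.length))) :
    (Mopt.card : ℝ) ≤ 3 / 2 * M.card :=
  odd_components_condition_implies_three_halves_general G M Mopt hM hMopt h
end

section
/- In an instance of the stable marriage problem with ties, let M be a stable matching and M_opt a maximum-cardinality stable matching. If the graph contains no dangerous path with respect to M, then every component of M ⊕ M_opt which is an augmenting path for M has length at least 5, and consequently |M_opt| ≤ (3/2)·|M|. -/
/-- An instance of the stable marriage problem with ties: a bipartite
acceptability relation between men `U` and women `W`, together with preference
lists given by rank functions (a smaller rank means a more preferred partner;
equal ranks encode ties, i.e. indifference). -/
structure SMI (U W : Type*) where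
  acc : U → W → Prop
  mrank : U → W → ℕ
  wrank : W → U → ℕ

namespace SMI

variable {U W : Type*}

/-- A matching: a set of mutually acceptable pairs in which every man and
every woman appears at most once. -/
def IsMatching (I : SMI U W) (M : Finset (U × W)) : Prop :=
  (∀ p ∈ M, I.acc p.1 p.2) ∧
  (∀ p ∈ M, ∀ q ∈ M, p.1 = q.1 → p = q) ∧
  (∀ p ∈ M, ∀ q ∈ M, p.2 = q.2 → p = q)

/-- Man `m` is unmatched (free) in `M`. -/
def ManUnmatched (M : Finset (U × W)) (m : U) : Prop := ∀ w, (m, w) ∉ M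

/-- Woman `w` is unmatched (free) in `M`. -/
def WomanUnmatched (M : Finset (U × W)) (w : W) : Prop := ∀ m, (m, w) ∉ M

/-- `(m, w)` is a blocking pair for `M`: they are mutually acceptable, not
matched to each other, `m` is unmatched or strictly prefers `w` to his partner,
and `w` is unmatched or strictly prefers `m` to her partner. -/
def Blocking (I : SMI U W) (M : Finset (U × W)) (m : U) (w : W) : Prop :=
  I.acc m w ∧ (m, w) ∉ M ∧
  (∀ w', (m, w') ∈ M → I.mrank m w < I.mrank m w') ∧
  (∀ m', (m', w) ∈ M → I.wrank w m < I.wrank w m')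

/-- `M` is a stable matching: a matching admitting no blocking pair. -/
def Stable (I : SMI U W) (M : Finset (U × W)) : Prop :=
  I.IsMatching M ∧ ∀ m w, ¬ I.Blocking M m w

/-- A dangerous path `(w, m₁, w₁, m)` with respect to `M`: an alternating path
with `(m₁, w₁) ∈ M`, the edges `(m₁, w)` and `(m, w₁)` present but not in `M`,
`w` and `m` unmatched in `M`, such that `(m₁, w₁)` is not a blocking pair for
the matching `M' = {(m₁, w), (m, w₁)}`. -/
def DangerousPath [DecidableEq U] [DecidableEq W] (I : SMI U W) (M : Finset (U × W))
    (w : W) (m₁ : U) (w₁ : W) (m : U) : Prop :=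
  I.acc m₁ w ∧ I.acc m w₁ ∧ (m₁, w₁) ∈ M ∧ (m₁, w) ∉ M ∧ (m, w₁) ∉ M ∧
  WomanUnmatched M w ∧ ManUnmatched M m ∧
  ¬ I.Blocking ({(m₁, w), (m, w₁)} : Finset (U × W)) m₁ w₁

end SMI

/-! A stable `N` admits no short augmenting path for `M`: one of length 1 would be an edge
blocking `M`, and one `(w, m₁, w₁, m)` of length 3 is not dangerous, so `(m₁, w₁)` blocks
`{(m₁, w), (m, w₁)}` and hence blocks `N`. For the bound, let `A` and `B` be the edges of `N`
whose man, resp. woman, is `M`-matched, and `T` those with an `M`-unmatched endpoint. Stability of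
`M` gives `A ∪ B = N`, so `2|N| ≤ |A| + |B| + |T|`. Sending an edge to the `M`-edge at an
`M`-matched endpoint injects each of `A`, `B` and `T` into `M`: two edges of `T` meeting the same
`M`-edge at opposite ends would form an augmenting path of length 3. -/

namespace SMI

variable {U W : Type*}

theorem IsMatching.injOn_fst {I : SMI U W} {M : Finset (U × W)} (hM : I.IsMatching M) :
    Set.InjOn Prod.fst (M : Set (U × W)) :=
  fun p hp q hq => hM.2.1 p hp q hq

theorem IsMatching.injOn_snd {I : SMI U W} {M : Finset (U × W)} (hM : I.IsMatching M) :
    Set.InjOn Prod.snd (M : Set (U × W)) :=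
  fun p hp q hq => hM.2.2 p hp q hq

theorem Stable.not_unmatched_of_acc {I : SMI U W} {M : Finset (U × W)} (hM : I.Stable M)
    {m : U} {w : W} (hacc : I.acc m w) : ¬ (ManUnmatched M m ∧ WomanUnmatched M w) :=
  fun ⟨hm, hw⟩ =>
    hM.2 m w ⟨hacc, hm w, fun w' h => (hm w' h).elim, fun m' h => (hw m' h).elim⟩

theorem Stable.not_unmatched_of_not_dangerousPath [DecidableEq U] [DecidableEq W]
    {I : SMI U W} {M N : Finset (U × W)} (hM : I.IsMatching M) (hN : I.Stable N)
    {m₁ m : U} {w₁ w : W} (hnd : ¬ I.DangerousPath M w m₁ w₁ m)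
    (hM₁ : (m₁, w₁) ∈ M) (hN₁ : (m₁, w) ∈ N) (hN₂ : (m, w₁) ∈ N) :
    ¬ (WomanUnmatched M w ∧ ManUnmatched M m) := by
  rintro ⟨hw, hm⟩
  have hblock : I.Blocking {(m₁, w), (m, w₁)} m₁ w₁ := by
    by_contra h
    exact hnd ⟨hN.1.1 _ hN₁, hN.1.1 _ hN₂, hM₁, hw m₁, hm w₁, hw, hm, h⟩
  have hman : I.mrank m₁ w₁ < I.mrank m₁ w := hblock.2.2.1 w (by simp)
  have hwoman : I.wrank w₁ m₁ < I.wrank w₁ m := hblock.2.2.2 m (by simp)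
  refine hN.2 m₁ w₁ ⟨hM.1 _ hM₁, fun h => ?_, fun w' h => ?_, fun m' h => ?_⟩
  · cases hN.1.injOn_fst hN₁ h rfl
    exact hman.false
  · cases hN.1.injOn_fst hN₁ h rfl
    exact hman
  · cases hN.1.injOn_snd hN₂ h rfl
    exact hwoman

theorem Stable.two_le_of_augmentingPath [DecidableEq U] [DecidableEq W]
    {I : SMI U W} {M N : Finset (U × W)} (hM : I.Stable M) (hN : I.Stable N)
    (hnd : ∀ w m₁ w₁ m, ¬ I.DangerousPath M w m₁ w₁ m)
    {j : ℕ} (ws : Fin (j + 1) → W) (ms : Fin (j + 1) → U)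
    (hN_edges : ∀ i, (ms i, ws i) ∈ N)
    (hM_edges : ∀ i : Fin j, (ms i.castSucc, ws i.succ) ∈ M)
    (hw : WomanUnmatched M (ws 0)) (hm : ManUnmatched M (ms (Fin.last j))) : 2 ≤ j := by
  rcases j with _ | _ | j
  · exact (hM.not_unmatched_of_acc (hN.1.1 _ (hN_edges 0)) ⟨hm, hw⟩).elim
  · exact (hN.not_unmatched_of_not_dangerousPath hM.1 (hnd _ _ _ _)
      (hM_edges 0) (hN_edges 0) (hN_edges 1) ⟨hw, hm⟩).elim
  · omega

section Counting

open Classical Finset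

variable {M N : Finset (U × W)}

theorem card_filter_not_manUnmatched_le (hN : Set.InjOn Prod.fst (N : Set (U × W))) :
    #{p ∈ N | ¬ ManUnmatched M p.1} ≤ #M := by
  refine card_le_card_of_forall_subsingleton (fun p q => q.1 = p.1) (fun p hp => ?_)
    fun q _ p hp p' hp' => hN (mem_filter.1 hp.1).1 (mem_filter.1 hp'.1).1
      ((hp.2 : q.1 = p.1).symm.trans hp'.2)
  obtain ⟨w, hw⟩ : ∃ w, (p.1, w) ∈ M := by
    simpa [ManUnmatched] using (mem_filter.1 hp).2
  exact ⟨_, hw, rfl⟩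

theorem card_filter_not_womanUnmatched_le (hN : Set.InjOn Prod.snd (N : Set (U × W))) :
    #{p ∈ N | ¬ WomanUnmatched M p.2} ≤ #M := by
  refine card_le_card_of_forall_subsingleton (fun p q => q.2 = p.2) (fun p hp => ?_)
    fun q _ p hp p' hp' => hN (mem_filter.1 hp.1).1 (mem_filter.1 hp'.1).1
      ((hp.2 : q.2 = p.2).symm.trans hp'.2)
  obtain ⟨m, hm⟩ : ∃ m, (m, p.2) ∈ M := by
    simpa [WomanUnmatched] using (mem_filter.1 hp).2
  exact ⟨_, hm, rfl⟩

theorem card_filter_unmatched_le (hN₁ : Set.InjOn Prod.fst (N : Set (U × W)))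
    (hN₂ : Set.InjOn Prod.snd (N : Set (U × W)))
    (hcover : ∀ p ∈ N, ¬ (ManUnmatched M p.1 ∧ WomanUnmatched M p.2))
    (hthree : ∀ m₁ w₁ w m, (m₁, w₁) ∈ M → (m₁, w) ∈ N → (m, w₁) ∈ N →
      ¬ (WomanUnmatched M w ∧ ManUnmatched M m)) :
    #{p ∈ N | ManUnmatched M p.1 ∨ WomanUnmatched M p.2} ≤ #M := by
  set T := {p ∈ N | ManUnmatched M p.1 ∨ WomanUnmatched M p.2}
  have not_opposite :
      ∀ q ∈ M, ∀ p ∈ T, ∀ p' ∈ T, q.1 = p.1 → q.2 = p'.2 → False := by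
    intro q hq p hp p' hp' h₁ h₂
    obtain ⟨hpN, hp⟩ := mem_filter.1 hp
    obtain ⟨hp'N, hp'⟩ := mem_filter.1 hp'
    have hw : WomanUnmatched M p.2 :=
      hp.resolve_left fun h => h q.2 (by rw [← h₁]; exact hq)
    have hm : ManUnmatched M p'.1 :=
      hp'.resolve_right fun h => h q.1 (by rw [← h₂]; exact hq)
    exact hthree q.1 q.2 p.2 p'.1 hq (by rw [h₁]; exact hpN) (by rw [h₂]; exact hp'N)
      ⟨hw, hm⟩
  refine card_le_card_of_forall_subsingleton (fun p q => q.1 = p.1 ∨ q.2 = p.2)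
    (fun p hp => ?_) fun q hq p hp p' hp' => ?_
  · obtain ⟨hpN, -⟩ := mem_filter.1 hp
    by_cases hm : ManUnmatched M p.1
    · obtain ⟨m, hm'⟩ : ∃ m, (m, p.2) ∈ M := by
        simpa [WomanUnmatched] using fun hw => hcover p hpN ⟨hm, hw⟩
      exact ⟨_, hm', Or.inr rfl⟩
    · obtain ⟨w, hw⟩ : ∃ w, (p.1, w) ∈ M := by simpa [ManUnmatched] using hm
      exact ⟨_, hw, Or.inl rfl⟩
  · have hpN := (mem_filter.1 hp.1).1
    have hp'N := (mem_filter.1 hp'.1).1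
    rcases hp.2 with h | h <;> rcases hp'.2 with h' | h'
    · exact hN₁ hpN hp'N (h.symm.trans h')
    · exact (not_opposite q hq p hp.1 p' hp'.1 h h').elim
    · exact (not_opposite q hq p' hp'.1 p hp.1 h' h).elim
    · exact hN₂ hpN hp'N (h.symm.trans h')

theorem two_mul_card_le_three_mul_card (hN₁ : Set.InjOn Prod.fst (N : Set (U × W)))
    (hN₂ : Set.InjOn Prod.snd (N : Set (U × W)))
    (hcover : ∀ p ∈ N, ¬ (ManUnmatched M p.1 ∧ WomanUnmatched M p.2))
    (hthree : ∀ m₁ w₁ w m, (m₁, w₁) ∈ M → (m₁, w) ∈ N → (m, w₁) ∈ N →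
      ¬ (WomanUnmatched M w ∧ ManUnmatched M m)) :
    2 * #N ≤ 3 * #M := by
  set A := {p ∈ N | ¬ ManUnmatched M p.1}
  set B := {p ∈ N | ¬ WomanUnmatched M p.2}
  set T := {p ∈ N | ManUnmatched M p.1 ∨ WomanUnmatched M p.2}
  have hA : #A ≤ #M := card_filter_not_manUnmatched_le hN₁
  have hB : #B ≤ #M := card_filter_not_womanUnmatched_le hN₂
  have hT : #T ≤ #M := card_filter_unmatched_le hN₁ hN₂ hcover hthree
  have hunion : A ∪ B = N := by
    ext p
    have := hcover p
    simp only [A, B, mem_union, mem_filter]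
    tauto
  have hsplit : #N ≤ #(A ∩ B) + #T := by
    refine (card_le_card fun p hp => ?_).trans (card_union_le _ _)
    simp only [A, B, T, mem_union, mem_inter, mem_filter]
    tauto
  have hinter := card_union_add_card_inter A B
  rw [hunion] at hinter
  omega

end Counting

end SMI

theorem no_dangerous_path_implies_augmenting_paths_long_and_three_halves_general
    {U W : Type*} [DecidableEq U] [DecidableEq W]
    (I : SMI U W) (M Mopt : Finset (U × W))
    (hM : I.Stable M) (hMopt : I.Stable Mopt)
    (hnd : ∀ (w : W) (m₁ : U) (w₁ : W) (m : U), ¬ I.DangerousPath M w m₁ w₁ m) :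
    (∀ (j : ℕ) (ws : Fin (j + 1) → W) (ms : Fin (j + 1) → U),
      Function.Injective ws → Function.Injective ms →
      (∀ i, (ms i, ws i) ∈ Mopt \ M) →
      (∀ i : Fin j, (ms i.castSucc, ws i.succ) ∈ M \ Mopt) →
      SMI.WomanUnmatched M (ws 0) → SMI.ManUnmatched M (ms (Fin.last j)) →
      5 ≤ 2 * j + 1) ∧
    (Mopt.card : ℝ) ≤ 3 / 2 * M.card := by
  refine ⟨fun j ws ms _ _ hMopt_edges hM_edges hw hm => ?_, ?_⟩
  · have := hM.two_le_of_augmentingPath hMopt hnd ws ms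
      (fun i => (Finset.mem_sdiff.1 (hMopt_edges i)).1)
      (fun i => (Finset.mem_sdiff.1 (hM_edges i)).1) hw hm
    omega
  · have hcount : 2 * Mopt.card ≤ 3 * M.card :=
      SMI.two_mul_card_le_three_mul_card hMopt.1.injOn_fst hMopt.1.injOn_snd
        (fun p hp => hM.not_unmatched_of_acc (hMopt.1.1 p hp))
        fun _ _ _ _ hM₁ hN₁ hN₂ =>
          hMopt.not_unmatched_of_not_dangerousPath hM.1 (hnd _ _ _ _) hM₁ hN₁ hN₂
    have : (2 * Mopt.card : ℝ) ≤ 3 * M.card := by exact_mod_cast hcount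
    linarith

/-- if `M` is a stable matching, `Mopt` a maximum-cardinality
stable matching, and there is no dangerous path with respect to `M`, then every
component of `M ∆ Mopt` which is an augmenting path for `M` (here described
explicitly: women `ws 0, …, ws j`, men `ms 0, …, ms j`, `Mopt`-edges
`(ms i, ws i)`, `M`-edges `(ms i, ws (i+1))`, endpoints `ws 0` and `ms j`
unmatched in `M`) has length `2j+1 ≥ 5`, and consequently
`|Mopt| ≤ (3/2)·|M|`. -/
theorem no_dangerous_path_implies_augmenting_paths_long_and_three_halves
    {U W : Type*} [DecidableEq U] [DecidableEq W] [Fintype U] [Fintype W]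
    (I : SMI U W) (M Mopt : Finset (U × W))
    (hM : I.Stable M) (hMopt : I.Stable Mopt)
    (hmax : ∀ N : Finset (U × W), I.Stable N → N.card ≤ Mopt.card)
    (hnd : ∀ (w : W) (m₁ : U) (w₁ : W) (m : U), ¬ I.DangerousPath M w m₁ w₁ m) :
    (∀ (j : ℕ) (ws : Fin (j + 1) → W) (ms : Fin (j + 1) → U),
      Function.Injective ws → Function.Injective ms →
      (∀ i, (ms i, ws i) ∈ Mopt \ M) →
      (∀ i : Fin j, (ms i.castSucc, ws i.succ) ∈ M \ Mopt) →
      SMI.WomanUnmatched M (ws 0) → SMI.ManUnmatched M (ms (Fin.last j)) →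
      5 ≤ 2 * j + 1) ∧
    (Mopt.card : ℝ) ≤ 3 / 2 * M.card :=
  no_dangerous_path_implies_augmenting_paths_long_and_three_halves_general I M Mopt hM hMopt hnd
end

section
/- Let M and M_opt be matchings in a bipartite graph such that M is maximal and M ⊕ M_opt contains no connected component that is a path with exactly one M-edge and two M_opt-edges. Then |M_opt| ≤ (3/2)·|M|. -/
/-!
Let `X` be the set of vertices covered by `M`, so `#X ≤ 2 #M`. By maximality every edge of
`Mopt` has an endpoint in `X`; call it exposed if its other endpoint is not in `X`. Since the
edges of `Mopt` are disjoint, `2 #Mopt ≤ #X + #(exposed edges)`. Sending an exposed edge to the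
`M`-edge at its covered endpoint is injective: two exposed edges `s(a, b)`, `s(c, d)` sent to
the same `M`-edge `s(b, c)` form an augmenting path `a - b - c - d` whose endpoints `a`, `d`
meet no other edge of `M ∆ Mopt`. Hence there are at most `#M` exposed edges and
`2 #Mopt ≤ 3 #M`.
-/

open scoped symmDiff

open Finset

namespace IsMatchingIn

variable {V : Type*} {G : SimpleGraph V} {M : Finset (Sym2 V)}

theorem eq_of_mem_of_mem (hM : IsMatchingIn G M) {e f : Sym2 V} (he : e ∈ M) (hf : f ∈ M)
    {v : V} (hve : v ∈ e) (hvf : v ∈ f) : e = f :=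
  by_contra fun hne => hM.2 e he f hf hne v hve hvf

theorem not_isDiag (hM : IsMatchingIn G M) {e : Sym2 V} (he : e ∈ M) : ¬ e.IsDiag :=
  G.not_isDiag_of_mem_edgeSet (hM.1 he)

theorem sum_card_toFinset_inter_le [DecidableEq V] (hM : IsMatchingIn G M) (S : Finset V) :
    ∑ e ∈ M, #(e.toFinset ∩ S) ≤ #S := by
  rw [← card_biUnion]
  · exact card_le_card (biUnion_subset.2 fun _ _ => inter_subset_right)
  · intro e he f hf hne
    refine disjoint_left.2 fun v hve hvf => hM.2 e he f hf hne v ?_ ?_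
    · exact Sym2.mem_toFinset.1 (mem_inter.1 hve).1
    · exact Sym2.mem_toFinset.1 (mem_inter.1 hvf).1

end IsMatchingIn

section

variable {V : Type*} [DecidableEq V]

def coveredVertices (M : Finset (Sym2 V)) : Finset V :=
  M.biUnion Sym2.toFinset

theorem mem_coveredVertices {M : Finset (Sym2 V)} {v : V} :
    v ∈ coveredVertices M ↔ ∃ f ∈ M, v ∈ f := by
  simp [coveredVertices, Sym2.mem_toFinset]

theorem card_coveredVertices_le (M : Finset (Sym2 V)) : #(coveredVertices M) ≤ 2 * #M := by
  refine card_biUnion_le.trans ?_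
  rw [mul_comm, ← smul_eq_mul, ← sum_const]
  refine sum_le_sum fun e _ => ?_
  rw [Sym2.card_toFinset]
  split <;> omega

def exposedEdges (M N : Finset (Sym2 V)) : Finset (Sym2 V) :=
  {e ∈ N | ¬ e.toFinset ⊆ coveredVertices M}

theorem two_le_card_toFinset_inter_add {e : Sym2 V} {S : Finset V} (he : ¬ e.IsDiag)
    (hmeet : ∃ v ∈ e, v ∈ S) :
    2 ≤ #(e.toFinset ∩ S) + if ¬ e.toFinset ⊆ S then 1 else 0 := by
  by_cases hsub : e.toFinset ⊆ S
  · rw [if_neg (not_not.2 hsub), inter_eq_left.2 hsub, Sym2.card_toFinset_of_not_isDiag e he]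
  · obtain ⟨v, hve, hvS⟩ := hmeet
    have : 0 < #(e.toFinset ∩ S) :=
      card_pos.2 ⟨v, mem_inter.2 ⟨Sym2.mem_toFinset.2 hve, hvS⟩⟩
    rw [if_pos hsub]
    omega

variable {G : SimpleGraph V} {M N : Finset (Sym2 V)}

theorem two_mul_card_le_card_coveredVertices_add (hN : IsMatchingIn G N)
    (hcover : ∀ e ∈ N, ∃ v ∈ e, v ∈ coveredVertices M) :
    2 * #N ≤ #(coveredVertices M) + #(exposedEdges M N) :=
  calc 2 * #N = ∑ _e ∈ N, 2 := by rw [sum_const, smul_eq_mul, mul_comm]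
    _ ≤ ∑ e ∈ N, (#(e.toFinset ∩ coveredVertices M)
          + if ¬ e.toFinset ⊆ coveredVertices M then 1 else 0) :=
      sum_le_sum fun e he => two_le_card_toFinset_inter_add (hN.not_isDiag he) (hcover e he)
    _ = ∑ e ∈ N, #(e.toFinset ∩ coveredVertices M)
          + #(exposedEdges M N) := by
      rw [sum_add_distrib, exposedEdges, card_filter]
    _ ≤ _ := Nat.add_le_add_right (hN.sum_card_toFinset_inter_le _) _

/-- For matchings `M`, `N`: a connected component of `M ∆ N` that is an `M`-augmenting path
with three edges. -/
def HasIsolatedAugmentingPathOfLengthThree (M N : Finset (Sym2 V)) : Prop :=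
  ∃ a b c d : V, a ≠ b ∧ a ≠ c ∧ a ≠ d ∧ b ≠ c ∧ b ≠ d ∧ c ≠ d ∧
    s(a, b) ∈ N \ M ∧ s(b, c) ∈ M \ N ∧ s(c, d) ∈ N \ M ∧
    (∀ e ∈ M ∆ N, (a ∈ e → e = s(a, b)) ∧ (d ∈ e → e = s(c, d)))

theorem hasIsolatedAugmentingPathOfLengthThree_of_uncovered_ends
    (hN : IsMatchingIn G N) {a b c d : V}
    (hab : s(a, b) ∈ N) (hcd : s(c, d) ∈ N) (hbc : s(b, c) ∈ M) (hne : s(a, b) ≠ s(c, d))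
    (ha : a ∉ coveredVertices M) (hd : d ∉ coveredVertices M) :
    HasIsolatedAugmentingPathOfLengthThree M N := by
  have hb : b ∈ coveredVertices M := mem_coveredVertices.2 ⟨_, hbc, Sym2.mem_mk_left b c⟩
  have hc : c ∈ coveredVertices M := mem_coveredVertices.2 ⟨_, hbc, Sym2.mem_mk_right b c⟩
  have not_mem_M : ∀ {x y : V}, x ∉ coveredVertices M → s(x, y) ∉ M := fun hx hxy =>
    hx (mem_coveredVertices.2 ⟨_, hxy, Sym2.mem_mk_left _ _⟩)
  have isolated : ∀ {x : V} {e₀ : Sym2 V}, x ∉ coveredVertices M → e₀ ∈ N →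
      x ∈ e₀ → ∀ e ∈ M ∆ N, x ∈ e → e = e₀ := by
    intro x e₀ hx he₀ hxe₀ e he hxe
    rcases mem_symmDiff.1 he with ⟨heM, -⟩ | ⟨heN, -⟩
    · exact absurd (mem_coveredVertices.2 ⟨e, heM, hxe⟩) hx
    · exact hN.eq_of_mem_of_mem heN he₀ hxe hxe₀
  refine ⟨a, b, c, d, ?_, ?_, ?_, ?_, ?_, ?_, mem_sdiff.2 ⟨hab, not_mem_M ha⟩,
    mem_sdiff.2 ⟨hbc, fun hbcN => ?_⟩, mem_sdiff.2 ⟨hcd, Sym2.eq_swap ▸ not_mem_M hd⟩,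
    fun e he => ⟨isolated ha hab (Sym2.mem_mk_left a b) e he,
      isolated hd hcd (Sym2.mem_mk_right c d) e he⟩⟩
  · rintro rfl; exact ha hb
  · rintro rfl; exact ha hc
  · rintro rfl
    exact hne (hN.eq_of_mem_of_mem hab hcd (Sym2.mem_mk_left a b) (Sym2.mem_mk_right c a))
  · rintro rfl
    exact hne (hN.eq_of_mem_of_mem hab hcd (Sym2.mem_mk_right a b) (Sym2.mem_mk_left b d))
  · rintro rfl; exact hd hb
  · rintro rfl; exact hd hc
  · have : s(a, b) = s(b, c) :=
      hN.eq_of_mem_of_mem hab hbcN (Sym2.mem_mk_right a b) (Sym2.mem_mk_left b c)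
    exact not_mem_M ha (this ▸ hbc)

theorem eq_of_mem_exposedEdges_of_meet (hN : IsMatchingIn G N)
    (hpath : ¬ HasIsolatedAugmentingPathOfLengthThree M N) {e₁ e₂ f : Sym2 V}
    (he₁ : e₁ ∈ exposedEdges M N) (he₂ : e₂ ∈ exposedEdges M N) (hf : f ∈ M)
    (hf₁ : ∃ v ∈ e₁, v ∈ f) (hf₂ : ∃ v ∈ e₂, v ∈ f) : e₁ = e₂ := by
  by_contra hne
  obtain ⟨he₁, hx₁⟩ := mem_filter.1 he₁
  obtain ⟨he₂, hx₂⟩ := mem_filter.1 he₂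
  obtain ⟨a, hae, ha⟩ := not_subset.1 hx₁
  obtain ⟨d, hde, hd⟩ := not_subset.1 hx₂
  obtain ⟨b, hbe, hbf⟩ := hf₁
  obtain ⟨c, hce, hcf⟩ := hf₂
  have covered : ∀ {x : V}, x ∈ f → x ∈ coveredVertices M :=
    fun hx => mem_coveredVertices.2 ⟨f, hf, hx⟩
  have hab : a ≠ b := by rintro rfl; exact ha (covered hbf)
  have hdc : d ≠ c := by rintro rfl; exact hd (covered hcf)
  have hbc : b ≠ c := by rintro rfl; exact hne (hN.eq_of_mem_of_mem he₁ he₂ hbe hce)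
  obtain rfl := (Sym2.mem_and_mem_iff hab).1 ⟨Sym2.mem_toFinset.1 hae, hbe⟩
  obtain rfl := (Sym2.mem_and_mem_iff hdc).1 ⟨Sym2.mem_toFinset.1 hde, hce⟩
  rw [Sym2.eq_swap (a := d)] at he₂ hne
  exact hpath <| hasIsolatedAugmentingPathOfLengthThree_of_uncovered_ends hN he₁ he₂
    ((Sym2.mem_and_mem_iff hbc).1 ⟨hbf, hcf⟩ ▸ hf) hne ha hd

theorem card_exposedEdges_le (hN : IsMatchingIn G N)
    (hcover : ∀ e ∈ N, ∃ v ∈ e, v ∈ coveredVertices M)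
    (hpath : ¬ HasIsolatedAugmentingPathOfLengthThree M N) :
    #(exposedEdges M N) ≤ #M := by
  have hmeet : ∀ e ∈ N, ∃ f ∈ M, ∃ v ∈ e, v ∈ f := fun e he => by
    obtain ⟨v, hve, hv⟩ := hcover e he
    obtain ⟨f, hf, hvf⟩ := mem_coveredVertices.1 hv
    exact ⟨f, hf, v, hve, hvf⟩
  choose! φ hφM hφmeet using hmeet
  refine card_le_card_of_injOn φ (fun e he => hφM e (mem_filter.1 he).1) ?_
  intro e₁ he₁ e₂ he₂ hφ
  have hN₁ := (mem_filter.1 he₁).1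
  exact eq_of_mem_exposedEdges_of_meet hN hpath he₁ he₂ (hφM e₁ hN₁)
    (hφmeet e₁ hN₁) (hφ ▸ hφmeet e₂ (mem_filter.1 he₂).1)

end

theorem maximal_no_short_augmenting_component_three_halves_general
    {V : Type*} [DecidableEq V] (G : SimpleGraph V)
    (M Mopt : Finset (Sym2 V)) (hMopt : IsMatchingIn G Mopt)
    (hmaximal : ∀ e ∈ G.edgeSet, ∃ f ∈ M, ∃ v : V, v ∈ e ∧ v ∈ f)
    (h : ¬ ∃ a b c d : V, a ≠ b ∧ a ≠ c ∧ a ≠ d ∧ b ≠ c ∧ b ≠ d ∧ c ≠ d ∧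
      s(a, b) ∈ Mopt \ M ∧ s(b, c) ∈ M \ Mopt ∧ s(c, d) ∈ Mopt \ M ∧
      (∀ e ∈ M ∆ Mopt, (a ∈ e → e = s(a, b)) ∧ (d ∈ e → e = s(c, d)))) :
    (Mopt.card : ℝ) ≤ 3 / 2 * M.card := by
  have hcover : ∀ e ∈ Mopt, ∃ v ∈ e, v ∈ coveredVertices M := fun e he => by
    obtain ⟨f, hf, v, hve, hvf⟩ := hmaximal e (hMopt.1 he)
    exact ⟨v, hve, mem_coveredVertices.2 ⟨f, hf, hvf⟩⟩
  have hcount : 2 * #Mopt ≤ 3 * #M := by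
    have := two_mul_card_le_card_coveredVertices_add hMopt hcover
    have := card_coveredVertices_le M
    have := card_exposedEdges_le hMopt hcover h
    omega
  have hcount' : (2 * #Mopt : ℝ) ≤ 3 * #M := by exact_mod_cast hcount
  linarith

/-- let `M`, `Mopt` be matchings in a bipartite graph with `M`
maximal, such that `M ∆ Mopt` has no connected component that is a path with
exactly one `M`-edge and two `Mopt`-edges (i.e. no component consisting of the
path `a - b - c - d` with `s(a,b), s(c,d) ∈ Mopt \ M`, `s(b,c) ∈ M \ Mopt`, and
no further edge of `M ∆ Mopt` at the endpoints `a` and `d`).  Then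
`|Mopt| ≤ (3/2)·|M|`. -/
theorem maximal_no_short_augmenting_component_three_halves
    {V : Type*} [Fintype V] [DecidableEq V] (G : SimpleGraph V)
    (hbip : G.Colorable 2)
    (M Mopt : Finset (Sym2 V)) (hM : IsMatchingIn G M) (hMopt : IsMatchingIn G Mopt)
    (hmaximal : ∀ e ∈ G.edgeSet, ∃ f ∈ M, ∃ v : V, v ∈ e ∧ v ∈ f)
    (h : ¬ ∃ a b c d : V, a ≠ b ∧ a ≠ c ∧ a ≠ d ∧ b ≠ c ∧ b ≠ d ∧ c ≠ d ∧
      s(a, b) ∈ Mopt \ M ∧ s(b, c) ∈ M \ Mopt ∧ s(c, d) ∈ Mopt \ M ∧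
      (∀ e ∈ M ∆ Mopt, (a ∈ e → e = s(a, b)) ∧ (d ∈ e → e = s(c, d)))) :
    (Mopt.card : ℝ) ≤ 3 / 2 * M.card :=
  maximal_no_short_augmenting_component_three_halves_general G M Mopt hMopt hmaximal h
end

section
/- Let M be a stable b-matching in a many-to-many matching instance with ties, and let P = (w, u₁, w₁, u) be a dangerous path with respect to M. Then either w and w₁ are equally good for u₁ (masculine dangerous path), or u and u₁ are equally good for w₁ (feminine dangerous path). -/
/-- A many-to-many stable `b`-matching instance: a bipartite acceptability
relation between `U`-agents and `W`-agents, capacities `bU`, `bW`, and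
preference lists given by rank functions (smaller rank = more preferred;
equal ranks encode ties). -/
structure BMI (U W : Type*) where
  acc : U → W → Prop
  bU : U → ℕ
  bW : W → ℕ
  urank : U → W → ℕ
  wrank : W → U → ℕ

namespace BMI

variable {U W : Type*} [DecidableEq U] [DecidableEq W]

/-- The degree of a `U`-agent `u` in `M`. -/
def degU (M : Finset (U × W)) (u : U) : ℕ := (M.filter (fun p => p.1 = u)).card

/-- The degree of a `W`-agent `w` in `M`. -/
def degW (M : Finset (U × W)) (w : W) : ℕ := (M.filter (fun p => p.2 = w)).card

/-- `M` is a `b`-matching: a set of mutually acceptable pairs respecting all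
capacities. -/
def IsBMatching (I : BMI U W) (M : Finset (U × W)) : Prop :=
  (∀ p ∈ M, I.acc p.1 p.2) ∧ (∀ u, degU M u ≤ I.bU u) ∧ (∀ w, degW M w ≤ I.bW w)

/-- `u` is saturated in `M`. -/
def SatU (I : BMI U W) (M : Finset (U × W)) (u : U) : Prop := degU M u = I.bU u

/-- `w` is saturated in `M`. -/
def SatW (I : BMI U W) (M : Finset (U × W)) (w : W) : Prop := degW M w = I.bW w

/-- `(u, w)` is a blocking pair for `M`: an acceptable pair not in `M` such
that `u` is unsaturated or strictly prefers `w` to some member of `M(u)`, and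
`w` is unsaturated or strictly prefers `u` to some member of `M(w)`. -/
def Blocking (I : BMI U W) (M : Finset (U × W)) (u : U) (w : W) : Prop :=
  I.acc u w ∧ (u, w) ∉ M ∧
  (degU M u < I.bU u ∨ ∃ w', (u, w') ∈ M ∧ I.urank u w < I.urank u w') ∧
  (degW M w < I.bW w ∨ ∃ u', (u', w) ∈ M ∧ I.wrank w u < I.wrank w u')

/-- `M` is a stable `b`-matching. -/
def Stable (I : BMI U W) (M : Finset (U × W)) : Prop :=
  I.IsBMatching M ∧ ∀ u w, ¬ I.Blocking M u w

end BMI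

/-- A dangerous path `(w, u₁, w₁, u)` with respect to a stable `b`-matching
`M`: `(u₁, w₁) ∈ M`, the acceptable pairs `(u₁, w)`, `(u, w₁)` are not in `M`,
`w` and `u` are unsaturated, `u₁` and `w₁` are saturated, and `(u₁, w₁)` is not
a blocking pair for `M' = (M \ {(u₁, w₁)}) ∪ {(u₁, w), (u, w₁)}`. -/
def BMI.DangerousPath {U W : Type*} [DecidableEq U] [DecidableEq W]
    (I : BMI U W) (M : Finset (U × W)) (w : W) (u₁ : U) (w₁ : W) (u : U) : Prop :=
  I.acc u₁ w ∧ I.acc u w₁ ∧ (u₁, w₁) ∈ M ∧ (u₁, w) ∉ M ∧ (u, w₁) ∉ M ∧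
  BMI.degW M w < I.bW w ∧ BMI.degU M u < I.bU u ∧
  I.SatU M u₁ ∧ I.SatW M w₁ ∧
  ¬ I.Blocking (insert (u₁, w) (insert (u, w₁) (M.erase (u₁, w₁)))) u₁ w₁

/-! Stability of `M` already gives `w₁ ≿ w` for `u₁` and `u₁ ≿ u` for `w₁`. Since `(u₁, w₁)` is
acceptable and not in `M'`, it fails to block `M'` only if `u₁` ranks every `M'`-partner at
least as high as `w₁`, or `w₁` every `M'`-partner at least as high as `u₁`; as `w ∈ M'(u₁)` and
`u ∈ M'(w₁)`, this is the reverse inequality on one side. No degree in `M'` needs to be computed. -/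

namespace BMI

variable {U W : Type*} [DecidableEq U] [DecidableEq W] {I : BMI U W} {M : Finset (U × W)}

theorem ranks_le_of_not_blocking {u : U} {w : W} (hacc : I.acc u w) (hnotMem : (u, w) ∉ M)
    (h : ¬ I.Blocking M u w) :
    (∀ w', (u, w') ∈ M → I.urank u w' ≤ I.urank u w) ∨
      (∀ u', (u', w) ∈ M → I.wrank w u' ≤ I.wrank w u) := by
  by_contra! ⟨⟨w', hw', hw'lt⟩, ⟨u', hu', hu'lt⟩⟩
  exact h ⟨hacc, hnotMem, .inr ⟨w', hw', hw'lt⟩, .inr ⟨u', hu', hu'lt⟩⟩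

theorem Stable.urank_le_of_degW_lt (hM : I.Stable M) {u : U} {w w' : W} (hacc : I.acc u w)
    (hnotMem : (u, w) ∉ M) (hw : degW M w < I.bW w) (hw' : (u, w') ∈ M) :
    I.urank u w' ≤ I.urank u w :=
  not_lt.mp fun hlt => hM.2 u w ⟨hacc, hnotMem, .inr ⟨w', hw', hlt⟩, .inl hw⟩

theorem Stable.wrank_le_of_degU_lt (hM : I.Stable M) {u u' : U} {w : W} (hacc : I.acc u w)
    (hnotMem : (u, w) ∉ M) (hu : degU M u < I.bU u) (hu' : (u', w) ∈ M) :
    I.wrank w u' ≤ I.wrank w u :=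
  not_lt.mp fun hlt => hM.2 u w ⟨hacc, hnotMem, .inl hu, .inr ⟨u', hu', hlt⟩⟩

end BMI

/-- a dangerous path `(w, u₁, w₁, u)` with respect to a stable
`b`-matching `M` is masculine (`w` and `w₁` are equally good for `u₁`) or
feminine (`u` and `u₁` are equally good for `w₁`). -/
theorem bmatching_dangerous_path_masculine_or_feminine
    {U W : Type*} [DecidableEq U] [DecidableEq W]
    (I : BMI U W) (M : Finset (U × W)) (hM : I.Stable M)
    (w : W) (u₁ : U) (w₁ : W) (u : U) (hd : I.DangerousPath M w u₁ w₁ u) :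
    I.urank u₁ w = I.urank u₁ w₁ ∨ I.wrank w₁ u = I.wrank w₁ u₁ := by
  obtain ⟨hacc, hacc₁, hmem, hnotMem, hnotMem₁, hw, hu, hsat, hsat₁, hnotBlocking⟩ := hd
  have hu₁ : u ≠ u₁ := by rintro rfl; exact hu.ne hsat
  have hw₁ : w ≠ w₁ := by rintro rfl; exact hw.ne hsat₁
  have hle := hM.urank_le_of_degW_lt hacc hnotMem hw hmem
  have hle₁ := hM.wrank_le_of_degU_lt hacc₁ hnotMem₁ hu hmem
  rcases BMI.ranks_le_of_not_blocking (hM.1.1 _ hmem) (by simp [hu₁.symm, hw₁.symm])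
    hnotBlocking with h | h
  · exact .inl (le_antisymm (h w (by simp)) hle)
  · exact .inr (le_antisymm (h u (by simp)) hle₁)
end
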